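/- If G is a finite k-connected graph with entanglement equal to k, then G is an abstract k-molecule: there exists a set B_k of k vertices such that (i) B_k is a vertex cover of G, (ii) every vertex outside B_k is adjacent to all vertices of B_k and to no vertex outside B_k, and (iii) |V(G) \ B_k| ≥ k − k' where k' is the connectivity of the induced subgraph G[B_k]. -/

import Mathlib

open SimpleGraph

/-- `G` is `m`-connected in the sense of Menger: any two distinct vertices are
joined by `m` pairwise distinct, internally disjoint paths. -/
def MengerConnected {V : Type*} (m : ℕ) (G : SimpleGraph V) : Prop :=
  ∀ u v : V, u ≠ v → ∃ P : Fin m → G.Path u v, Function.Injective P ∧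
    ∀ i j, i ≠ j → ∀ x, x ∈ (P i).1.support → x ∈ (P j).1.support → x = u ∨ x = v

/-- The connectivity of a graph: the largest `m` for which it is `m`-connected. -/
noncomputable def connectivity {V : Type*} (G : SimpleGraph V) : ℕ :=
  sSup {m | MengerConnected m G}

/-- `X` is a vertex cover of `G`. -/
def IsVertexCover {V : Type*} (G : SimpleGraph V) (X : Finset V) : Prop :=
  ∀ ⦃v w : V⦄, G.Adj v w → v ∈ X ∨ w ∈ X

/-- Cops' winning positions in the entanglement game on `G` with `k` cops (Thief on
`v`, cops on `C`, Cops to move). -/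
inductive CopsWin {V : Type*} [DecidableEq V] (G : SimpleGraph V) (k : ℕ) :
    V → Finset V → Prop
  | step {v : V} {C C' : Finset V}
      (hmove : C' = C ∨ C' = insert v C ∨ ∃ x ∈ C, C' = insert v (C.erase x))
      (hcard : C'.card ≤ k)
      (hnext : ∀ w, G.Adj v w → w ∉ C' → CopsWin G k w C') :
      CopsWin G k v C

/-- The entanglement of `G`. -/
noncomputable def entanglement {V : Type*} [DecidableEq V] (G : SimpleGraph V) : ℕ :=
  sInf {k | ∀ v : V, CopsWin G k v ∅}

/-!
Menger's condition gives every vertex at least `k` neighbours. If `G` had no vertex cover of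
size at most `k`, the thief would evade `k` cops forever: when a cop lands on the thief's
vertex `v`, the thief moves to a neighbour that still has a neighbour free of cops. Otherwise
some cop-free neighbour `w₀` of `v` has all its neighbours among the cops `C`, so `C` separates
`w₀` from an edge `ab` of `G - C`, and the `k` internally disjoint `w₀`–`a` paths enter the
component of `a` in `G - C` through `k` distinct vertices of `C`, one of which is `v`.

So entanglement `k` yields a vertex cover `S` with `|S| ≤ k`; by the degree bound every vertex
outside `S` is adjacent to exactly `S`, whence `|S| = k`. Finally, of `k` internally disjoint
paths between two vertices of `S`, at most `|Sᶜ|` leave `S`, which bounds the connectivity of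
`G[S]`.
-/

open Finset

section Molecule

variable {V : Type*} {G : SimpleGraph V}

def IsInternallyDisjoint {ι : Type*} {u v : V} (P : ι → G.Path u v) : Prop :=
  Function.Injective P ∧
    ∀ i j, i ≠ j → ∀ x, x ∈ (P i).1.support → x ∈ (P j).1.support → x = u ∨ x = v

namespace IsInternallyDisjoint

variable {ι κ : Type*} {u v : V} {P : ι → G.Path u v}

lemma comp (hP : IsInternallyDisjoint P) {f : κ → ι} (hf : Function.Injective f) :
    IsInternallyDisjoint (P ∘ f) :=
  ⟨hP.1.comp hf, fun i j hij => hP.2 (f i) (f j) (hf.ne hij)⟩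

lemma exists_injective_adj (hP : IsInternallyDisjoint P) (huv : u ≠ v) :
    ∃ s : ι → V, Function.Injective s ∧ ∀ i, G.Adj u (s i) := by
  have hnil : ∀ i, ¬(P i).1.Nil := fun i => Walk.not_nil_of_ne huv
  refine ⟨fun i => (P i).1.snd, fun i j (hij : (P i).1.snd = (P j).1.snd) => ?_,
    fun i => Walk.adj_snd (hnil i)⟩
  by_contra hne
  have hmem : ∀ i, (P i).1.snd ∈ (P i).1.support := fun i => (P i).1.getVert_mem_support 1
  rcases hP.2 i j hne _ (hmem i) (hij ▸ hmem j) with h | h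
  · exact (Walk.adj_snd (hnil i)).ne h.symm
  · have hadj : G.Adj u v := h ▸ Walk.adj_snd (hnil i)
    have hsingle : ∀ l, (P l).1.snd = v → (P l).1 = hadj.toWalk := by
      intro l hl
      have hmem := (P l).1.mk_start_snd_mem_edges (hnil l)
      rw [hl] at hmem
      exact (P l).2.eq_adj_toWalk_of_mem_edges hmem
    exact hne (hP.1 (Subtype.ext ((hsingle i h).trans (hsingle j (hij ▸ h)).symm)))

lemma card_filter_exists_mem_le [Fintype ι] [DecidableEq V] (hP : IsInternallyDisjoint P)
    (X : Finset V) (hu : u ∉ X) (hv : v ∉ X) :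
    #{i | ∃ x ∈ (P i).1.support, x ∈ X} ≤ #X := by
  have : Nonempty V := ⟨u⟩
  have hex : ∀ i ∈ ({i | ∃ x ∈ (P i).1.support, x ∈ X} : Finset ι),
      ∃ x ∈ (P i).1.support, x ∈ X := fun i hi => (mem_filter.1 hi).2
  choose! x hxP hxX using hex
  refine card_le_card_of_injOn x (fun i hi => hxX i hi) fun i hi j hj hij => ?_
  by_contra hne
  rcases hP.2 i j hne _ (hxP i hi) (hij ▸ hxP j hj) with h | h
  · exact hu (h ▸ hxX i hi)
  · exact hv (h ▸ hxX i hi)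

lemma induce {s : Set V} {u v : s} {P : ι → G.Path u v} (hP : IsInternallyDisjoint P)
    (hs : ∀ i, ∀ x ∈ (P i).1.support, x ∈ s) :
    ∃ Q : ι → (G.induce s).Path u v, IsInternallyDisjoint Q := by
  let incl := (SimpleGraph.Embedding.induce (G := G) s).toHom
  have hmap : ∀ i, ((P i).1.induce s (hs i)).map incl = (P i).1 := fun i => Walk.map_induce _ _
  refine ⟨fun i => ⟨(P i).1.induce s (hs i), ?_⟩, fun i j hij => ?_,
    fun i j hij x hxi hxj => ?_⟩
  · exact Walk.IsPath.of_map (f := incl) ((hmap i).symm ▸ (P i).2)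
  · have := congrArg (fun q : (G.induce s).Path u v => q.1.map incl) hij
    simp only at this
    rw [hmap, hmap] at this
    exact hP.1 (Subtype.ext this)
  · simp only [Walk.support_induce, List.mem_attachWith] at hxi hxj
    exact (hP.2 i j hij x hxi hxj).imp Subtype.ext Subtype.ext

end IsInternallyDisjoint

variable {k : ℕ}

def MinDegreeGE (G : SimpleGraph V) (k : ℕ) : Prop :=
  ∀ v (T : Finset V), #T < k → ∃ w, G.Adj v w ∧ w ∉ T

lemma MinDegreeGE.le_card (hdeg : MinDegreeGE G k) {v : V} {T : Finset V}
    (hT : G.neighborSet v ⊆ T) : k ≤ #T := by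
  by_contra! h
  obtain ⟨w, hvw, hw⟩ := hdeg v T h
  exact hw (hT hvw)

lemma MinDegreeGE.neighborSet_eq (hdeg : MinDegreeGE G k) {S : Finset V}
    (hS : _root_.IsVertexCover G S) (hSk : #S ≤ k) {v : V} (hv : v ∉ S) :
    G.neighborSet v = S := by
  classical
  have hsub : G.neighborSet v ⊆ S := fun w hw => (hS hw).resolve_left hv
  refine hsub.antisymm fun b hb => by_contra fun hvb => ?_
  have hle := hdeg.le_card (T := S.erase b) fun w hw =>
    mem_erase.2 ⟨fun h => hvb (h ▸ hw), hsub hw⟩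
  have := card_erase_of_mem (s := S) hb
  have := card_pos.2 ⟨b, hb⟩
  omega

namespace MengerConnected

lemma minDegreeGE [Nontrivial V] (hconn : MengerConnected k G) : MinDegreeGE G k := by
  intro v T hT
  obtain ⟨u, hu⟩ := exists_ne v
  obtain ⟨P, hP⟩ := hconn v u hu.symm
  obtain ⟨s, hs, hadj⟩ := IsInternallyDisjoint.exists_injective_adj (P := P) hP hu.symm
  by_contra! h
  have := card_le_card_of_injOn s (s := univ) (t := T) (fun i _ => h _ (hadj i)) hs.injOn
  simp only [card_univ, Fintype.card_fin] at this
  omega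

lemma lt_card [Fintype V] [Nontrivial V] (hconn : MengerConnected k G) : k < Fintype.card V := by
  classical
  obtain ⟨v, -⟩ := exists_pair_ne V
  have := hconn.minDegreeGE.le_card (v := v) (T := univ.erase v) fun w hw =>
    mem_erase.2 ⟨(G.ne_of_adj hw).symm, mem_univ w⟩
  rw [card_erase_of_mem (mem_univ v), card_univ] at this
  have := Fintype.card_pos (α := V)
  omega

lemma le_connectivity [Finite V] [Nontrivial V] {m : ℕ} (h : MengerConnected m G) :
    m ≤ connectivity G := by
  refine le_csSup ⟨Nat.card V, fun n hn => ?_⟩ h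
  obtain ⟨u, v, huv⟩ := exists_pair_ne V
  obtain ⟨P, hP⟩ := hn u v huv
  obtain ⟨s, hs, -⟩ := IsInternallyDisjoint.exists_injective_adj (P := P) hP huv
  simpa using Nat.card_le_card_of_injective s hs

lemma induce [Fintype V] [DecidableEq V] (hconn : MengerConnected k G) (B : Finset V) :
    MengerConnected (k - #Bᶜ) (G.induce (B : Set V)) := by
  intro u v huv
  obtain ⟨P, hP⟩ := hconn u v (Subtype.coe_injective.ne huv)
  have hP : IsInternallyDisjoint P := hP
  have hbad := hP.card_filter_exists_mem_le Bᶜ (by simp) (by simp)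
  have hgood : k - #Bᶜ ≤ Fintype.card {i // ∀ x ∈ (P i).1.support, x ∈ B} := by
    rw [Fintype.card_subtype]
    have := card_filter_add_card_filter_not (s := univ) fun i => ∀ x ∈ (P i).1.support, x ∈ B
    simp only [not_forall, mem_compl, exists_prop, card_univ, Fintype.card_fin] at this hbad
    omega
  obtain ⟨f⟩ := Function.Embedding.nonempty_of_card_le
    (α := Fin (k - #Bᶜ)) (β := {i // ∀ x ∈ (P i).1.support, x ∈ B}) (by simpa using hgood)
  exact (hP.comp (f := Subtype.val ∘ f) (Subtype.val_injective.comp f.injective)).induce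
    fun i => (f i).2

lemma sub_connectivity_induce_le [Fintype V] [DecidableEq V] [Nontrivial V]
    (hconn : MengerConnected k G) (B : Finset V) :
    k - connectivity (G.induce (B : Set V)) ≤ #Bᶜ := by
  rcases subsingleton_or_nontrivial (B : Set V) with hB | hB
  · have h1 : #B ≤ 1 := by simpa using Fintype.card_le_one_iff_subsingleton.2 hB
    have := hconn.lt_card
    have := card_add_card_compl B
    omega
  · have := (hconn.induce B).le_connectivity
    omega

end MengerConnected

section Game

variable [DecidableEq V]

lemma copsWin_card_of_notMem [Fintype V] (C : Finset V) :
    ∀ v ∉ C, CopsWin G (Fintype.card V) v C :=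
  C.strongDownwardInductionOn (fun _ ih _ _ hv => .step (Or.inr (Or.inl rfl)) (card_le_univ _)
    fun w _ hw => ih (card_le_univ _) (ssubset_insert hv) w hw) (card_le_univ C)

lemma copsWin_entanglement [Fintype V] (v : V) : CopsWin G (entanglement G) v ∅ :=
  Nat.sInf_mem (s := {k | ∀ v, CopsWin G k v ∅})
    ⟨_, fun v => copsWin_card_of_notMem ∅ v (notMem_empty v)⟩ v

lemma entanglement_eq_zero (h : ∀ v w, ¬G.Adj v w) : entanglement G = 0 :=
  Nat.sInf_eq_zero.2 <| .inl fun v => .step (Or.inl rfl) (by simp) fun w hw => absurd hw (h v w)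

end Game

namespace MengerConnected

lemma exists_adj_notMem_of_separates (hconn : MengerConnected k G) {C : Finset V}
    (hC : #C ≤ k) {w₀ a b c : V} (hw₀ : w₀ ∉ C) (hNw₀ : G.neighborSet w₀ ⊆ C)
    (hab : G.Adj a b) (ha : a ∉ C) (hb : b ∉ C) (hc : c ∈ C) :
    ∃ y, G.Adj c y ∧ y ∉ C ∧ ∃ z, G.Adj y z ∧ z ∉ C := by
  classical
  set R : Set V := {x | ∃ p : G.Walk a x, ∀ y ∈ p.support, y ∉ C}
  have haR : a ∈ R := ⟨.nil, by simpa⟩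
  have hR_C : ∀ x ∈ R, x ∉ C := fun x ⟨p, hp⟩ => hp x p.end_mem_support
  have hR_step : ∀ x ∈ R, ∀ y, G.Adj x y → y ∉ C → y ∈ R := by
    rintro x ⟨p, hp⟩ y hxy hy
    exact ⟨p.concat hxy, by simpa [Walk.support_concat, or_imp, forall_and] using ⟨hp, hy⟩⟩
  have hR_free : ∀ x ∈ R, ∃ z, G.Adj x z ∧ z ∉ C := by
    rintro x ⟨p, hp⟩
    by_cases hnil : p.Nil
    · obtain rfl := hnil.eq
      exact ⟨b, hab, hb⟩
    · exact ⟨p.penultimate, (p.adj_penultimate hnil).symm, hp _ (p.getVert_mem_support _)⟩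
  have hw₀R : w₀ ∉ R := fun hw => by
    obtain ⟨z, hz, hzC⟩ := hR_free w₀ hw
    exact hzC (hNw₀ hz)
  obtain ⟨P, hPinj, hdisj⟩ := hconn w₀ a fun h => hw₀R (h ▸ haR)
  -- the `k` paths enter `R` through `k` distinct vertices of `C`, hence through all of `C`
  have hcross : ∀ i, ∃ x ∈ (P i).1.support, x ∈ C ∧ ∃ y ∈ R, G.Adj x y := by
    intro i
    obtain ⟨d, hd, hdR, hdR'⟩ := (P i).1.exists_boundary_dart Rᶜ hw₀R (by simpa using haR)
    refine ⟨d.fst, (P i).1.dart_fst_mem_support_of_mem_darts hd, ?_, d.snd,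
      by simpa using hdR', d.adj⟩
    by_contra hdC
    exact hdR (hR_step _ (by simpa using hdR') _ d.adj.symm hdC)
  choose x hxP hxC y hyR hxy using hcross
  have hx : Function.Injective x := fun i j hij => by_contra fun hne => by
    rcases hdisj i j hne _ (hxP i) (hij ▸ hxP j) with h | h
    · exact hw₀ (h ▸ hxC i)
    · exact hR_C _ haR (h ▸ hxC i)
  have himage : univ.image x = C :=
    eq_of_subset_of_card_le (by simpa [subset_iff] using hxC)
      (by simpa [card_image_of_injective _ hx] using hC)
  obtain ⟨i, -, rfl⟩ := mem_image.1 (himage ▸ hc)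
  exact ⟨y i, hxy i, hR_C _ (hyR i), hR_free _ (hyR i)⟩

lemma exists_adj_notMem_of_not_isVertexCover (hconn : MengerConnected k G) {C : Finset V}
    (hC : #C ≤ k) (hcov : ¬_root_.IsVertexCover G C) {v : V} (hv : v ∈ C) :
    ∃ w, G.Adj v w ∧ w ∉ C ∧ ∃ z, G.Adj w z ∧ z ∉ C := by
  classical
  obtain ⟨a, b, hab, ha, hb⟩ : ∃ a b, G.Adj a b ∧ a ∉ C ∧ b ∉ C := by
    simpa [_root_.IsVertexCover] using hcov
  have : Nontrivial V := nontrivial_of_ne a b hab.ne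
  obtain ⟨w₀, hvw₀, hw₀⟩ := hconn.minDegreeGE v (C.erase v) <| by
    have := card_erase_of_mem hv; have := card_pos.2 ⟨v, hv⟩; omega
  have hw₀C : w₀ ∉ C := fun h => hw₀ (mem_erase.2 ⟨hvw₀.ne', h⟩)
  by_cases hfree : ∃ z, G.Adj w₀ z ∧ z ∉ C
  · exact ⟨w₀, hvw₀, hw₀C, hfree⟩
  · exact hconn.exists_adj_notMem_of_separates hC hw₀C
      (fun z hz => by_contra fun hzC => hfree ⟨z, hz, hzC⟩) hab ha hb hv

lemma not_copsWin [DecidableEq V] (hconn : MengerConnected k G)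
    (hcov : ∀ S : Finset V, #S ≤ k → ¬_root_.IsVertexCover G S) {v : V} {C : Finset V}
    (hvC : v ∉ C) (hfree : ∃ w, G.Adj v w ∧ w ∉ C) : ¬CopsWin G k v C := by
  intro hwin
  induction hwin with
  | @step v C C' hmove hcard _ ih =>
    by_cases hvC' : v ∈ C'
    · obtain ⟨w, hvw, hwC', hw⟩ :=
        hconn.exists_adj_notMem_of_not_isVertexCover hcard (hcov C' hcard) hvC'
      exact ih w hvw hwC' hwC' hw
    · obtain rfl : C' = C := by
        rcases hmove with h | h | ⟨x, -, h⟩ <;> simp_all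
      obtain ⟨w, hvw, hwC⟩ := hfree
      exact ih w hvw hwC hwC ⟨v, hvw.symm, hvC⟩

lemma exists_isVertexCover_card_le [DecidableEq V] (hconn : MengerConnected k G)
    (hwin : ∀ v, CopsWin G k v ∅) :
    ∃ S : Finset V, #S ≤ k ∧ _root_.IsVertexCover G S := by
  by_contra! hcov
  obtain ⟨a, b, hab⟩ : ∃ a b, G.Adj a b := by
    simpa [_root_.IsVertexCover] using hcov ∅ (by simp)
  exact hconn.not_copsWin hcov (notMem_empty a) ⟨b, hab, notMem_empty b⟩ (hwin a)

end MengerConnected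

end Molecule

/-- a `k`-connected graph of entanglement `k` is an abstract
`k`-molecule: there is a set `B` of `k` vertices which is a vertex cover, such that
every vertex outside `B` is adjacent to all of `B` and to no vertex outside `B`,
and the number of vertices outside `B` is at least `k - k'` where `k'` is the
connectivity of the subgraph induced by `B`. -/
theorem kConnected_entanglement_k_is_molecule
    {V : Type*} [Fintype V] [DecidableEq V] (k : ℕ) (G : SimpleGraph V)
    (hconn : MengerConnected k G) (hent : entanglement G = k) :
    ∃ B : Finset V, B.card = k ∧ _root_.IsVertexCover G B ∧
      (∀ v, v ∉ B → (∀ b ∈ B, G.Adj v b) ∧ (∀ w, w ∉ B → ¬ G.Adj v w)) ∧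
      k - connectivity (G.induce (B : Set V)) ≤ Bᶜ.card := by
  by_cases hempty : ∀ v w, ¬G.Adj v w
  · obtain rfl : k = 0 := hent.symm.trans (entanglement_eq_zero hempty)
    exact ⟨∅, rfl, fun v w h => absurd h (hempty v w),
      fun v _ => ⟨by simp, fun w _ => hempty v w⟩, by simp⟩
  obtain ⟨a, b, hab⟩ : ∃ a b, G.Adj a b := by simpa using hempty
  have : Nontrivial V := nontrivial_of_ne a b hab.ne
  obtain ⟨S, hSk, hS⟩ := hconn.exists_isVertexCover_card_le (hent ▸ copsWin_entanglement)
  obtain ⟨u, -, hu⟩ := exists_mem_notMem_of_card_lt_card (s := S) (t := univ)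
    (by simpa using hSk.trans_lt hconn.lt_card)
  have hN : ∀ v ∉ S, G.neighborSet v = S := fun v hv =>
    hconn.minDegreeGE.neighborSet_eq hS hSk hv
  refine ⟨S, hSk.antisymm (hconn.minDegreeGE.le_card (hN u hu).subset), hS,
    fun v hv => ⟨fun b hb => ?_, fun w hw hvw => hw ?_⟩, hconn.sub_connectivity_induce_le S⟩
  · rw [← G.mem_neighborSet, hN v hv]
    exact hb
  · rw [← mem_coe, ← hN v hv]
    exact hvw
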